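/- arXiv:math/0204038 — 2 statements merged into one kernel-verified Lean document; each statement's English description precedes it below -/
import Mathlib

section
/- Let $X_1$ and $X_2$ be linear spaces, $A: X_1 \to X_2$ a linear bijection, $P_1: X_1 \to X_1$ and $P_2: X_2 \to X_2$ linear projections (idempotents), and set $Q_1 = I - P_1$, $Q_2 = I - P_2$. Then the restricted operator $P_2 A P_1 : \operatorname{im} P_1 \to \operatorname{im} P_2$ is bijective if and only if $Q_1 A^{-1} Q_2 : \operatorname{im} Q_2 \to \operatorname{im} Q_1$ is bijective. Moreover, in this case $(P_2 A P_1)^{-1} = P_1 A^{-1} P_2 - P_1 A^{-1} Q_2 (Q_1 A^{-1} Q_2)^{-1} Q_1 A^{-1} P_2$. -/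
/-!
Let `C` invert `S = Q₁A⁻¹Q₂ : im Q₂ → im Q₁`. For `y ∈ im P₂` the vector
`x := A⁻¹y - A⁻¹(C Q₁A⁻¹y)` lies in `ker Q₁ = im P₁`, and `P₂Ax = y - P₂(C Q₁A⁻¹y) = y` because `C`
lands in `im Q₂ = ker P₂`. Conversely, for `x ∈ im P₁` put `z := Q₂Ax`; then `P₂Ax = Ax - z` and
`Q₁A⁻¹P₂Ax = -Sz`, so the formula returns `P₁A⁻¹(Ax - z + z) = x`. Replacing `(A, P₁, P₂)` by
`(A⁻¹, Q₂, Q₁)` exchanges the two compressions, which gives the converse.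
-/

section Compression

open LinearMap Function

variable {K X Y : Type*} [Ring K] [AddCommGroup X] [Module K X] [AddCommGroup Y] [Module K Y]

def LinearMap.compression (P' : Module.End K Y) (f : X →ₗ[K] Y) (P : Module.End K X) :
    range P →ₗ[K] range P' :=
  (P' ∘ₗ f ∘ₗ (range P).subtype).codRestrict (range P') fun _ => mem_range_self P' _

/-- The map `P₁A⁻¹P₂ - P₁A⁻¹Q₂ C Q₁A⁻¹P₂ : range P₂ → range P₁`. -/
def LinearEquiv.compressionInv (A : X ≃ₗ[K] Y) (P₁ Q₁ : Module.End K X) (P₂ Q₂ : Module.End K Y)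
    (C : range Q₁ →ₗ[K] range Q₂) (y : range P₂) : range P₁ :=
  ⟨P₁ (A.symm (P₂ y) - A.symm (Q₂ (C ⟨Q₁ (A.symm (P₂ y)), mem_range_self Q₁ _⟩))),
    mem_range_self P₁ _⟩

theorem IsIdempotentElem.mem_range_sub_iff {P : Module.End K X} (hP : IsIdempotentElem P)
    {v : X} : v ∈ range (LinearMap.id - P) ↔ P v = 0 := by
  rw [← hP.ker_eq_range, mem_ker]

namespace LinearEquiv

variable (A : X ≃ₗ[K] Y) {P₁ Q₁ : Module.End K X} {P₂ Q₂ : Module.End K Y}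

theorem rightInverse_compressionInv (hP₂ : IsIdempotentElem P₂) (hQ₁ : Q₁ = LinearMap.id - P₁)
    (hQ₂ : Q₂ = LinearMap.id - P₂) (C : range Q₁ →ₗ[K] range Q₂)
    (hC : RightInverse C (compression Q₁ A.symm Q₂)) :
    RightInverse (A.compressionInv P₁ Q₁ P₂ Q₂ C) (compression P₂ A P₁) := by
  rintro ⟨y, hy⟩
  have hP₂y : P₂ y = y := hP₂.mem_range_iff.1 hy
  apply Subtype.ext
  set w : range Q₁ := ⟨Q₁ (A.symm (P₂ y)), mem_range_self Q₁ _⟩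
  set c : Y := ↑(C w)
  have hQ₂c : Q₂ c = c := (hQ₂ ▸ hP₂.one_sub).mem_range_iff.1 (C w).2
  have hP₂c : P₂ c = 0 := hP₂.mem_range_sub_iff.1 (hQ₂ ▸ (C w).2)
  have hQ₁c : Q₁ (A.symm c) = Q₁ (A.symm y) := by rw [← hP₂y]; exact congrArg Subtype.val (hC w)
  have hP₁x : P₁ (A.symm y - A.symm c) = A.symm y - A.symm c := by
    have hQ₁x : Q₁ (A.symm y - A.symm c) = 0 := by rw [map_sub, hQ₁c, sub_self]
    rwa [hQ₁, LinearMap.sub_apply, id_apply, sub_eq_zero, eq_comm] at hQ₁x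
  change P₂ (A (P₁ (A.symm (P₂ y) - A.symm (Q₂ c)))) = y
  rw [hP₂y, hQ₂c, hP₁x, map_sub, A.apply_symm_apply, A.apply_symm_apply, map_sub, hP₂y, hP₂c,
    sub_zero]

theorem leftInverse_compressionInv (hP₁ : IsIdempotentElem P₁) (hP₂ : IsIdempotentElem P₂)
    (hQ₁ : Q₁ = LinearMap.id - P₁) (hQ₂ : Q₂ = LinearMap.id - P₂)
    (C : range Q₁ →ₗ[K] range Q₂) (hC : LeftInverse C (compression Q₁ A.symm Q₂)) :
    LeftInverse (A.compressionInv P₁ Q₁ P₂ Q₂ C) (compression P₂ A P₁) := by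
  rintro ⟨x, hx⟩
  have hP₁x : P₁ x = x := hP₁.mem_range_iff.1 hx
  have hQ₁x : Q₁ x = 0 := by rw [hQ₁, LinearMap.sub_apply, id_apply, hP₁x, sub_self]
  have hP₂P₂ : P₂ (P₂ (A x)) = P₂ (A x) := hP₂.mem_range_iff.1 (mem_range_self P₂ _)
  set z : range Q₂ := ⟨Q₂ (A x), mem_range_self Q₂ _⟩
  have hP₂Ax : P₂ (A x) = A x - z := by simp [z, hQ₂]
  have hQ₂z : Q₂ z = z := (hQ₂ ▸ hP₂.one_sub).mem_range_iff.1 z.2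
  have hCw : (C ⟨Q₁ (A.symm (P₂ (P₂ (A x)))), mem_range_self Q₁ _⟩ : Y) = -z := by
    have hw : (⟨Q₁ (A.symm (P₂ (P₂ (A x)))), mem_range_self Q₁ _⟩ : range Q₁) =
        -compression Q₁ A.symm Q₂ z :=
      Subtype.ext <| by
        change Q₁ (A.symm (P₂ (P₂ (A x)))) = -Q₁ (A.symm z)
        rw [hP₂P₂, hP₂Ax, map_sub, A.symm_apply_apply, map_sub, hQ₁x, zero_sub]
    rw [hw, map_neg, hC z, Submodule.coe_neg]
  apply Subtype.ext
  change P₁ (A.symm (P₂ (P₂ (A x))) -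
    A.symm (Q₂ (C ⟨Q₁ (A.symm (P₂ (P₂ (A x)))), mem_range_self Q₁ _⟩))) = x
  rw [hCw, map_neg, hQ₂z, hP₂P₂, hP₂Ax, map_sub A.symm, map_neg A.symm, A.symm_apply_apply,
    sub_neg_eq_add, sub_add_cancel, hP₁x]

theorem bijective_compression_of_bijective_compression_symm (hP₁ : IsIdempotentElem P₁)
    (hP₂ : IsIdempotentElem P₂) (hQ₁ : Q₁ = LinearMap.id - P₁) (hQ₂ : Q₂ = LinearMap.id - P₂)
    (h : Bijective (compression Q₁ A.symm Q₂)) : Bijective (compression P₂ A P₁) :=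
  let e := LinearEquiv.ofBijective _ h
  bijective_iff_has_inverse.2 ⟨A.compressionInv P₁ Q₁ P₂ Q₂ e.symm,
    A.leftInverse_compressionInv hP₁ hP₂ hQ₁ hQ₂ _ e.symm_apply_apply,
    A.rightInverse_compressionInv hP₂ hQ₁ hQ₂ _ e.apply_symm_apply⟩

theorem bijective_compression_iff_bijective_compression_symm (hP₁ : IsIdempotentElem P₁)
    (hP₂ : IsIdempotentElem P₂) (hQ₁ : Q₁ = LinearMap.id - P₁) (hQ₂ : Q₂ = LinearMap.id - P₂) :
    Bijective (compression P₂ A P₁) ↔ Bijective (compression Q₁ A.symm Q₂) := by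
  have hP₁' : P₁ = LinearMap.id - Q₁ := by rw [hQ₁, sub_sub_cancel]
  have hP₂' : P₂ = LinearMap.id - Q₂ := by rw [hQ₂, sub_sub_cancel]
  exact ⟨A.symm.bijective_compression_of_bijective_compression_symm (hQ₂ ▸ hP₂.one_sub)
    (hQ₁ ▸ hP₁.one_sub) hP₂' hP₁',
    A.bijective_compression_of_bijective_compression_symm hP₁ hP₂ hQ₁ hQ₂⟩

end LinearEquiv

end Compression

/-- Lemma 2.3: for a linear bijection `A : X₁ → X₂` and idempotents `P₁, P₂` with complements
`Q₁, Q₂`, the operator `P₂AP₁ : im P₁ → im P₂` is bijective iff `Q₁A⁻¹Q₂ : im Q₂ → im Q₁` is,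
and in that case `(P₂AP₁)⁻¹ = P₁A⁻¹P₂ - P₁A⁻¹Q₂ (Q₁A⁻¹Q₂)⁻¹ Q₁A⁻¹P₂`. -/
theorem stmt_0 {K : Type*} [Field K] {X1 X2 : Type*}
    [AddCommGroup X1] [Module K X1] [AddCommGroup X2] [Module K X2]
    (A : X1 ≃ₗ[K] X2) (P1 : X1 →ₗ[K] X1) (P2 : X2 →ₗ[K] X2)
    (hP1 : P1 ∘ₗ P1 = P1) (hP2 : P2 ∘ₗ P2 = P2)
    (Q1 : X1 →ₗ[K] X1) (Q2 : X2 →ₗ[K] X2)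
    (hQ1 : Q1 = LinearMap.id - P1) (hQ2 : Q2 = LinearMap.id - P2)
    -- `R = P₂AP₁ : im P₁ → im P₂`
    (R : LinearMap.range P1 →ₗ[K] LinearMap.range P2)
    (hR : R = LinearMap.codRestrict (LinearMap.range P2)
      (P2 ∘ₗ A.toLinearMap ∘ₗ (LinearMap.range P1).subtype)
      (fun x => LinearMap.mem_range_self P2 _))
    -- `S = Q₁A⁻¹Q₂ : im Q₂ → im Q₁`
    (S : LinearMap.range Q2 →ₗ[K] LinearMap.range Q1)
    (hS : S = LinearMap.codRestrict (LinearMap.range Q1)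
      (Q1 ∘ₗ A.symm.toLinearMap ∘ₗ (LinearMap.range Q2).subtype)
      (fun x => LinearMap.mem_range_self Q1 _)) :
    (Function.Bijective R ↔ Function.Bijective S) ∧
    -- the inverse formula: for any two-sided inverse `C` of `S = Q₁A⁻¹Q₂`, the map
    -- `y ↦ P₁ (A⁻¹ (P₂ y) - A⁻¹ (Q₂ (C (Q₁ (A⁻¹ (P₂ y))))))` is a two-sided inverse of `R`
    (∀ C : LinearMap.range Q1 →ₗ[K] LinearMap.range Q2,
      S ∘ₗ C = LinearMap.id → C ∘ₗ S = LinearMap.id →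
      (∀ y : LinearMap.range P2,
        R ⟨P1 (A.symm (P2 ↑y) -
              A.symm (Q2 ↑(C ⟨Q1 (A.symm (P2 ↑y)), LinearMap.mem_range_self Q1 _⟩))),
            LinearMap.mem_range_self P1 _⟩ = y) ∧
      (∀ x : LinearMap.range P1,
        (⟨P1 (A.symm (P2 ↑(R x)) -
              A.symm (Q2 ↑(C ⟨Q1 (A.symm (P2 ↑(R x))), LinearMap.mem_range_self Q1 _⟩))),
            LinearMap.mem_range_self P1 _⟩ : LinearMap.range P1) = x)) := by
  subst hR hS
  exact ⟨A.bijective_compression_iff_bijective_compression_symm hP1 hP2 hQ1 hQ2,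
    fun C hSC hCS => ⟨A.rightInverse_compressionInv hP2 hQ1 hQ2 C (LinearMap.congr_fun hSC),
      A.leftInverse_compressionInv hP1 hP2 hQ1 hQ2 C (LinearMap.congr_fun hCS)⟩⟩
end

section
/- Let $M(\phi) = T(\phi) + H(\phi)$ on $H^2(\mathbb{T})$. For all $\phi, \psi \in L^\infty(\mathbb{T})$ one has $M(\phi\psi) = M(\phi)M(\psi) + H(\phi)M(\tilde\psi - \psi)$ where $\tilde\psi(t)=\psi(t^{-1})$. In particular, $M(\phi\psi) = M(\phi)M(\psi)$ whenever $\psi$ is even, i.e. $\tilde\psi = \psi$. -/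
/-!
Since `J` is an involution with `J H² ⊥ H²` and `H² + J H²` dense, `L² = H² ⊕ J H²`, i.e.
`h = P h + J P J h` for every `h ∈ L²`. For `f ∈ H²` the function `g = f + Jf` is `J`-invariant and
`J (ψ g) = ψ̃ g`, so this decomposition of `ψ g` reads `ψ (f + Jf) = M(ψ) f + J M(ψ̃) f`.
Multiplying by `φ` and projecting gives `M(φψ) = T(φ) M(ψ) + H(φ) M(ψ̃)`, which rearranges to the
claimed identity.
-/
open MeasureTheory Complex Real
noncomputable section
namespace TH

abbrev Tp : ℝ := 2 * Real.pi
instance : Fact (0 < Tp) := ⟨by positivity⟩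
abbrev 𝕋 := AddCircle Tp
abbrev μ : Measure 𝕋 := AddCircle.haarAddCircle
abbrev L2 := Lp ℂ 2 μ

open scoped Classical in
/-- Multiplication operator by `φ` (defined to be `0` if `φ` is not essentially bounded). -/
def Lmul (φ : 𝕋 → ℂ) : L2 →L[ℂ] L2 :=
  if hφ : MemLp φ ⊤ μ then
    LinearMap.mkContinuous
      { toFun := fun f => ((Lp.memLp f).smul (r := 2) hφ).toLp (φ • ⇑f)
        map_add' := fun f g => by
          rw [← MemLp.toLp_add]
          exact MemLp.toLp_congr _ _ (by
            filter_upwards [Lp.coeFn_add f g] with x hx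
            simp only [Pi.smul_apply, smul_eq_mul, Pi.mul_apply, hx, Pi.add_apply, mul_add])
        map_smul' := fun c f => by
          rw [RingHom.id_apply, ← MemLp.toLp_const_smul]
          exact MemLp.toLp_congr ((Lp.memLp (c • f)).smul (r := 2) hφ)
            (((Lp.memLp f).smul (r := 2) hφ).const_smul c) (by
            filter_upwards [Lp.coeFn_smul c f] with x hx
            simp only [Pi.smul_apply, smul_eq_mul, Pi.mul_apply, hx]
            ring) }
      (eLpNorm φ ⊤ μ).toReal
      (fun f => by
        simp only [LinearMap.coe_mk, AddHom.coe_mk]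
        rw [Lp.norm_toLp, Lp.norm_def, ← ENNReal.toReal_mul]
        refine ENNReal.toReal_mono ?_ ?_
        · exact ENNReal.mul_ne_top hφ.eLpNorm_ne_top (Lp.eLpNorm_ne_top f)
        · exact eLpNorm_smul_le_eLpNorm_top_mul_eLpNorm 2 (Lp.aestronglyMeasurable f) φ)
  else 0

/-- Composition with `x ↦ -x` on `L²`. -/
def Cneg : L2 → L2 :=
  Lp.compMeasurePreserving (fun x : 𝕋 => -x) (Measure.measurePreserving_neg μ)

/-- The flip operator `J : f(t) ↦ t⁻¹ f(t⁻¹)`. -/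
def Jop : L2 →L[ℂ] L2 :=
  { toFun := fun f => Lmul (fun x => fourier (-1) x) (Cneg f)
    map_add' := fun f g => by
      show Lmul _ (Cneg (f + g)) = Lmul _ (Cneg f) + Lmul _ (Cneg g)
      unfold Cneg
      rw [map_add, map_add]
    map_smul' := fun c f => by
      show Lmul _ (Cneg (c • f)) = c • Lmul _ (Cneg f)
      rw [← map_smul (Lmul fun x => fourier (-1) x)]
      congr 1
      apply Lp.ext
      unfold Cneg
      filter_upwards [Lp.coeFn_compMeasurePreserving (c • f) (Measure.measurePreserving_neg μ),
        Lp.coeFn_smul c (Lp.compMeasurePreserving (fun x : 𝕋 => -x)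
          (Measure.measurePreserving_neg μ) f),
        (Measure.measurePreserving_neg μ).quasiMeasurePreserving.ae_eq_comp (Lp.coeFn_smul c f),
        Lp.coeFn_compMeasurePreserving f (Measure.measurePreserving_neg μ)]
        with x hx1 hx2 hx3 hx4
      refine hx1.trans (hx3.trans ?_)
      have h5 : ((c • (↑↑f : 𝕋 → ℂ)) ∘ Neg.neg) x = c • (↑↑f ∘ Neg.neg) x := rfl
      rw [h5, ← hx4]
      exact hx2.symm
    cont := by
      exact (Lmul _).continuous.comp
        (Lp.isometry_compMeasurePreserving (E := ℂ) (p := 2)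
          (Measure.measurePreserving_neg μ)).continuous }

/-- The Hardy space `H²(𝕋)`: closed span of `{t^n : n ≥ 0}`. -/
def Hardy : Submodule ℂ L2 :=
  (Submodule.span ℂ (Set.range fun n : ℕ => (fourierLp 2 (n : ℤ) : L2))).topologicalClosure

instance : CompleteSpace Hardy :=
  IsClosed.completeSpace_coe (hs := Submodule.isClosed_topologicalClosure _)

/-- The Riesz projection, as an operator on `L²(𝕋)`. -/
def Pproj : L2 →L[ℂ] L2 := Hardy.subtypeL ∘L Submodule.orthogonalProjectionOnto Hardy

/-- The Toeplitz operator `T(φ) : f ↦ P(φ f)` on `H²`. -/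
def Top (φ : 𝕋 → ℂ) : Hardy →L[ℂ] Hardy :=
  Submodule.orthogonalProjectionOnto Hardy ∘L Lmul φ ∘L Hardy.subtypeL

/-- The Hankel operator `H(φ) : f ↦ P(φ · Jf)` on `H²`. -/
def Hop (φ : 𝕋 → ℂ) : Hardy →L[ℂ] Hardy :=
  Submodule.orthogonalProjectionOnto Hardy ∘L Lmul φ ∘L Jop ∘L Hardy.subtypeL

/-- The Toeplitz + Hankel operator `M(φ) = T(φ) + H(φ)`. -/
def Mop (φ : 𝕋 → ℂ) : Hardy →L[ℂ] Hardy := Top φ + Hop φ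

/-- The flip `φ̃(t) = φ(t⁻¹)` of a function on the circle. -/
def flip (φ : 𝕋 → ℂ) : 𝕋 → ℂ := fun x => φ (-x)

open scoped ComplexInnerProductSpace ComplexConjugate

theorem _root_.Submodule.starProjection_add_conj_starProjection {𝕜 E : Type*} [RCLike 𝕜]
    [NormedAddCommGroup E] [InnerProductSpace 𝕜 E] {K : Submodule 𝕜 E}
    [K.HasOrthogonalProjection] {J : E →ₗ[𝕜] E} (hJ : Function.Involutive J)
    (hJK : ∀ x ∈ K, J x ∈ Kᗮ) (htotal : ∀ w ∈ Kᗮ, J w ∈ Kᗮ → w = 0) (h : E) :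
    K.starProjection h + J (K.starProjection (J h)) = h := by
  have hw : h - K.starProjection h - J (K.starProjection (J h)) ∈ Kᗮ :=
    Kᗮ.sub_mem (K.sub_starProjection_mem_orthogonal h) (hJK _ (K.starProjection_apply_mem _))
  have hJw : J (h - K.starProjection h - J (K.starProjection (J h))) ∈ Kᗮ := by
    rw [map_sub, map_sub, hJ, sub_right_comm]
    exact Kᗮ.sub_mem (K.sub_starProjection_mem_orthogonal (J h))
      (hJK _ (K.starProjection_apply_mem _))
  rw [eq_comm, ← sub_eq_zero, ← sub_sub]
  exact htotal _ hw hJw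

section Multiplication

variable {φ ψ : 𝕋 → ℂ}

lemma coeFn_Lmul (hφ : MemLp φ ⊤ μ) (f : L2) : ⇑(Lmul φ f) =ᵐ[μ] φ • ⇑f := by
  simp only [Lmul, dif_pos hφ, LinearMap.mkContinuous_apply, LinearMap.coe_mk, AddHom.coe_mk]
  exact MemLp.coeFn_toLp _

lemma Lmul_congr_ae (h : φ =ᵐ[μ] ψ) : Lmul φ = Lmul ψ := by
  by_cases hφ : MemLp φ ⊤ μ
  · ext1 f
    apply Lp.ext
    filter_upwards [coeFn_Lmul hφ f, coeFn_Lmul (hφ.ae_eq h) f, h] with x hφx hψx hx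
    simp only [hφx, hψx, Pi.smul_apply', hx]
  · have hψ : ¬ MemLp ψ ⊤ μ := fun hψ => hφ (hψ.ae_eq h.symm)
    simp only [Lmul, dif_neg hφ, dif_neg hψ]

lemma Lmul_mul (hφ : MemLp φ ⊤ μ) (hψ : MemLp ψ ⊤ μ) : Lmul (φ * ψ) = Lmul φ ∘L Lmul ψ := by
  ext1 f
  apply Lp.ext
  filter_upwards [coeFn_Lmul (hψ.mul hφ) f, coeFn_Lmul hφ (Lmul ψ f), coeFn_Lmul hψ f]
    with x hφψx hφx hψx
  simp only [ContinuousLinearMap.comp_apply, hφψx, hφx, hψx, smul_eq_mul, Pi.mul_apply,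
    mul_assoc]

lemma Lmul_sub (hφ : MemLp φ ⊤ μ) (hψ : MemLp ψ ⊤ μ) : Lmul (φ - ψ) = Lmul φ - Lmul ψ := by
  ext1 f
  apply Lp.ext
  filter_upwards [coeFn_Lmul (hφ.sub hψ) f, coeFn_Lmul hφ f, coeFn_Lmul hψ f,
    Lp.coeFn_sub (Lmul φ f) (Lmul ψ f)] with x hx hφx hψx hsub
  simp only [FunLike.coe_sub, Pi.sub_apply, hx, hsub, hφx, hψx, smul_eq_mul, sub_mul]

lemma memLp_flip (hψ : MemLp ψ ⊤ μ) : MemLp (flip ψ) ⊤ μ :=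
  hψ.comp_measurePreserving (Measure.measurePreserving_neg μ)

end Multiplication

section Flip

lemma memLp_top_fourier (n : ℤ) : MemLp (fun x : 𝕋 => fourier n x) ⊤ μ :=
  (fourier n).continuous.memLp_top_of_hasCompactSupport (HasCompactSupport.of_compactSpace _) μ

lemma fourier_apply_neg (n : ℤ) (x : 𝕋) : fourier n (-x) = fourier (-n) x := by
  rw [fourier_apply, fourier_apply, smul_neg, ← neg_smul]

lemma coeFn_Jop (f : L2) : ⇑(Jop f) =ᵐ[μ] fun x => fourier (-1) x * f (-x) := by
  filter_upwards [coeFn_Lmul (memLp_top_fourier (-1)) (Cneg f),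
    Lp.coeFn_compMeasurePreserving f (Measure.measurePreserving_neg μ)] with x hJ hneg
  rw [Jop, ContinuousLinearMap.coe_mk', LinearMap.coe_mk, AddHom.coe_mk, hJ, Pi.smul_apply',
    smul_eq_mul]
  exact congrArg _ hneg

lemma coeFn_comp_neg {f g : 𝕋 → ℂ} (h : f =ᵐ[μ] g) : (fun x => f (-x)) =ᵐ[μ] fun x => g (-x) :=
  (Measure.measurePreserving_neg μ).quasiMeasurePreserving.ae_eq_comp h

lemma Jop_fourierLp (n : ℤ) : Jop (fourierLp 2 n : L2) = fourierLp 2 (-1 - n) := by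
  apply Lp.ext
  filter_upwards [coeFn_Jop (fourierLp 2 n), coeFn_fourierLp 2 (-1 - n),
    coeFn_comp_neg (coeFn_fourierLp 2 n)] with x hJ hfour hneg
  rw [hJ, hfour, hneg, fourier_apply_neg, ← fourier_add, sub_eq_add_neg]

lemma Jop_involutive : Function.Involutive Jop := fun f => by
  apply Lp.ext
  filter_upwards [coeFn_Jop (Jop f), coeFn_comp_neg (coeFn_Jop f)] with x hJ hneg
  rw [hJ, hneg, neg_neg, fourier_apply_neg, ← mul_assoc, ← fourier_add]
  norm_num [fourier_zero]

lemma inner_Jop_left (f g : L2) : ⟪Jop f, g⟫ = ⟪f, Jop g⟫ := by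
  have hJf : (fun x => ⟪Jop f x, g x⟫) =ᵐ[μ] fun x => conj (fourier (-1) x * f (-x)) * g x := by
    filter_upwards [coeFn_Jop f] with x hx
    rw [hx, RCLike.inner_apply']
  have hJg : (fun x => ⟪f x, Jop g x⟫) =ᵐ[μ] fun x => conj (f x) * (fourier (-1) x * g (-x)) := by
    filter_upwards [coeFn_Jop g] with x hx
    rw [hx, RCLike.inner_apply']
  rw [L2.inner_def, L2.inner_def, integral_congr_ae hJf, integral_congr_ae hJg,
    ← integral_neg_eq_self]
  congr 1 with x
  rw [neg_neg, fourier_apply_neg, fourier_neg, map_mul, Complex.conj_conj]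
  ring

lemma Jop_Lmul {ψ : 𝕋 → ℂ} (hψ : MemLp ψ ⊤ μ) (f : L2) :
    Jop (Lmul ψ f) = Lmul (flip ψ) (Jop f) := by
  apply Lp.ext
  filter_upwards [coeFn_Jop (Lmul ψ f), coeFn_Lmul (memLp_flip hψ) (Jop f), coeFn_Jop f,
    coeFn_comp_neg (coeFn_Lmul hψ f)] with x hJ hflip hJf hneg
  simp only [hJ, hflip, hJf, hneg, Pi.smul_apply', smul_eq_mul, flip]
  ring

end Flip

section Hardy

lemma fourierLp_mem_Hardy (n : ℕ) : (fourierLp 2 (n : ℤ) : L2) ∈ Hardy :=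
  Submodule.le_topologicalClosure _ (Submodule.subset_span ⟨n, rfl⟩)

lemma fourierLp_mem_orthogonal_Hardy {k : ℤ} (hk : k < 0) : (fourierLp 2 k : L2) ∈ Hardyᗮ := by
  rw [Hardy, Submodule.orthogonal_closure, ← Submodule.span_singleton_le_iff_mem,
    ← Submodule.isOrtho_iff_le, Submodule.isOrtho_span]
  rintro _ rfl _ ⟨n, rfl⟩
  exact orthonormal_fourier.2 (by omega)

lemma Jop_mem_orthogonal_Hardy {f : L2} (hf : f ∈ Hardy) : Jop f ∈ Hardyᗮ := by
  have hle : Hardy ≤ Hardyᗮ.comap (Jop : L2 →ₗ[ℂ] L2) := by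
    refine Submodule.topologicalClosure_minimal _ ?_
      ((Submodule.isClosed_orthogonal _).preimage Jop.continuous)
    rw [Submodule.span_le]
    rintro _ ⟨n, rfl⟩
    rw [SetLike.mem_coe, Submodule.mem_comap, ContinuousLinearMap.coe_coe, Jop_fourierLp]
    exact fourierLp_mem_orthogonal_Hardy (by omega)
  exact hle hf

lemma eq_zero_of_inner_fourierLp_eq_zero {w : L2} (h : ∀ k : ℤ, ⟪(fourierLp 2 k : L2), w⟫ = 0) :
    w = 0 :=
  fourierBasis.repr.injective <| by
    ext k
    simp [fourierBasis.repr_apply_apply, coe_fourierBasis, h]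

lemma eq_zero_of_mem_orthogonal_Hardy {w : L2} (hw : w ∈ Hardyᗮ) (hJw : Jop w ∈ Hardyᗮ) :
    w = 0 := by
  refine eq_zero_of_inner_fourierLp_eq_zero fun k => ?_
  rcases k with n | n
  · exact Submodule.inner_right_of_mem_orthogonal (fourierLp_mem_Hardy n) hw
  · have hneg : (fourierLp 2 (Int.negSucc n) : L2) = Jop (fourierLp 2 n) := by
      rw [Jop_fourierLp, Int.negSucc_eq, neg_add, sub_eq_add_neg, add_comm]
    rw [hneg, inner_Jop_left]
    exact Submodule.inner_right_of_mem_orthogonal (fourierLp_mem_Hardy n) hJw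

lemma starProjection_Hardy_add_Jop (h : L2) :
    Hardy.starProjection h + Jop (Hardy.starProjection (Jop h)) = h :=
  Submodule.starProjection_add_conj_starProjection (J := (Jop : L2 →ₗ[ℂ] L2)) Jop_involutive
    (fun _ => Jop_mem_orthogonal_Hardy) (fun _ => eq_zero_of_mem_orthogonal_Hardy) h

end Hardy

section ToeplitzPlusHankel

variable {φ ψ : 𝕋 → ℂ}

lemma Mop_apply (χ : 𝕋 → ℂ) (f : Hardy) :
    Mop χ f = Hardy.orthogonalProjectionOnto (Lmul χ (f + Jop f)) := by
  simp only [Mop, Top, Hop, add_apply, ContinuousLinearMap.comp_apply,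
    Submodule.subtypeL_apply, map_add]

lemma Mop_congr_ae (h : φ =ᵐ[μ] ψ) : Mop φ = Mop ψ := by
  simp only [Mop, Top, Hop, Lmul_congr_ae h]

lemma Mop_sub (hφ : MemLp φ ⊤ μ) (hψ : MemLp ψ ⊤ μ) : Mop (φ - ψ) = Mop φ - Mop ψ := by
  ext1 f
  simp only [Mop_apply, Lmul_sub hφ hψ, sub_apply, map_sub]

lemma Lmul_add_Jop (hψ : MemLp ψ ⊤ μ) (f : Hardy) :
    Lmul ψ (f + Jop f) = (Mop ψ f : L2) + Jop (Mop (flip ψ) f) := by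
  have hJ : Jop (f + Jop f) = f + Jop f := by rw [map_add, Jop_involutive, add_comm]
  conv_lhs => rw [← starProjection_Hardy_add_Jop (Lmul ψ _), Jop_Lmul hψ, hJ]
  rw [Mop_apply, Mop_apply]
  rfl

lemma Mop_mul (hφ : MemLp φ ⊤ μ) (hψ : MemLp ψ ⊤ μ) :
    Mop (φ * ψ) = Top φ ∘L Mop ψ + Hop φ ∘L Mop (flip ψ) := by
  ext1 f
  rw [Mop_apply, Lmul_mul hφ hψ, ContinuousLinearMap.comp_apply, Lmul_add_Jop hψ, map_add,
    map_add]
  rfl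

end ToeplitzPlusHankel

/-- `M(φψ) = M(φ)M(ψ) + H(φ)M(ψ~ - ψ)`, and `M(φψ) = M(φ)M(ψ)` when `ψ` is even. -/
theorem stmt_3 (φ ψ : 𝕋 → ℂ) (hφ : MemLp φ ⊤ μ) (hψ : MemLp ψ ⊤ μ) :
    Mop (φ * ψ) = (Mop φ).comp (Mop ψ) + (Hop φ).comp (Mop (flip ψ - ψ)) ∧
    (flip ψ =ᵐ[μ] ψ → Mop (φ * ψ) = (Mop φ).comp (Mop ψ)) := by
  have hflip := memLp_flip hψ
  have hM : Mop (φ * ψ) = (Mop φ).comp (Mop ψ) + (Hop φ).comp (Mop (flip ψ - ψ)) := by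
    rw [Mop_mul hφ hψ, Mop_sub hflip hψ, show Mop φ = Top φ + Hop φ from rfl,
      ContinuousLinearMap.add_comp, ContinuousLinearMap.comp_sub]
    abel
  refine ⟨hM, fun heven => ?_⟩
  rw [hM, Mop_sub hflip hψ, Mop_congr_ae heven, sub_self, ContinuousLinearMap.comp_zero,
    add_zero]

end TH
end
end
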